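/- arXiv:2603.18308 — 2 statements merged into one kernel-verified Lean document; each statement's English description precedes it below -/
import Mathlib

section
/- In the lifted Gaussian update Σ⁺ = Σ̄ + K(Σ⁺_z − S)Kᵀ with K = Σ̄HᵀS⁻¹ and S = HΣ̄Hᵀ invertible, if Σ⁺_z is positive semidefinite then Σ⁺ is positive semidefinite; moreover HΣ⁺Hᵀ = Σ⁺_z. -/
open Matrix

/-- in the lifted update Σ⁺ = Σ̄ + K(Σ⁺_z − S)Kᵀ, positive semidefiniteness
of Σ⁺_z implies that of Σ⁺, and the output-space covariance is reproduced: HΣ⁺Hᵀ = Σ⁺_z. -/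
theorem lifted_cov_psd_and_consistent {d m : ℕ}
    (Sb : Matrix (Fin d) (Fin d) ℝ) (hSb : Sb.PosDef)
    (H : Matrix (Fin m) (Fin d) ℝ)
    (S : Matrix (Fin m) (Fin m) ℝ) (hS : S = H * Sb * Hᵀ) (hSinv : IsUnit S.det)
    (K : Matrix (Fin d) (Fin m) ℝ) (hK : K = Sb * Hᵀ * S⁻¹)
    (Sz : Matrix (Fin m) (Fin m) ℝ) (hSz : Sz.PosSemidef) :
    (Sb + K * (Sz - S) * Kᵀ).PosSemidef ∧
    H * (Sb + K * (Sz - S) * Kᵀ) * Hᵀ = Sz := by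
  have hSbT : Sbᵀ = Sb := by simpa using hSb.isHermitian.eq
  have hST : Sᵀ = S := by
    rw [hS]; simp [transpose_mul, hSbT, Matrix.mul_assoc]
  have hSiT : S⁻¹ᵀ = S⁻¹ := by rw [Matrix.transpose_nonsing_inv, hST]
  have c3 : S⁻¹ * S = 1 := Matrix.nonsing_inv_mul S hSinv
  have c4 : S * S⁻¹ = 1 := Matrix.mul_nonsing_inv S hSinv
  have c1 : ∀ X : Matrix (Fin m) (Fin d) ℝ, S⁻¹ * (S * X) = X := fun X => by
    rw [← Matrix.mul_assoc, c3, Matrix.one_mul]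
  have c2 : ∀ X : Matrix (Fin m) (Fin d) ℝ, S * (S⁻¹ * X) = X := fun X => by
    rw [← Matrix.mul_assoc, c4, Matrix.one_mul]
  have e2 : H * (Sb * Hᵀ) = S := by rw [hS, Matrix.mul_assoc]
  have e1 : ∀ X : Matrix (Fin m) (Fin d) ℝ, H * (Sb * (Hᵀ * X)) = S * X := fun X => by
    rw [hS]; simp only [Matrix.mul_assoc]
  have hKT : Kᵀ = S⁻¹ * (H * Sb) := by
    rw [hK]; simp [transpose_mul, hSbT, hSiT, Matrix.mul_assoc]
  have hcons : H * (Sb + K * (Sz - S) * Kᵀ) * Hᵀ = Sz := by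
    rw [hKT, hK]
    simp only [Matrix.mul_add, Matrix.add_mul, Matrix.mul_sub, Matrix.sub_mul,
      Matrix.mul_assoc, e1, e2, c1, c2, c3, c4, Matrix.mul_one, Matrix.one_mul]
    abel
  refine ⟨?_, hcons⟩
  set C : Matrix (Fin d) (Fin d) ℝ := 1 - Hᵀ * (S⁻¹ * (H * Sb)) with hC
  have hCT : Cᵀ = 1 - Sb * (Hᵀ * (S⁻¹ * H)) := by
    simp [hC, transpose_sub, transpose_mul, hSbT, hSiT, Matrix.mul_assoc]
  have hsplit : Sb + K * (Sz - S) * Kᵀ = Cᵀ * Sb * C + K * Sz * Kᵀ := by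
    rw [hCT, hC, hKT, hK]
    simp only [Matrix.mul_add, Matrix.add_mul, Matrix.mul_sub, Matrix.sub_mul,
      Matrix.mul_assoc, e1, e2, c1, c2, c3, c4, Matrix.mul_one, Matrix.one_mul]
    abel
  rw [hsplit]
  have h1 : (Cᵀ * Sb * C).PosSemidef := by
    have := hSb.posSemidef.conjTranspose_mul_mul_same C
    simpa using this
  have h2 : (K * Sz * Kᵀ).PosSemidef := by
    have := hSz.mul_mul_conjTranspose_same K
    simpa using this
  exact h1.add h2
end

section
/- Split conformal prediction with absolute-error scores: let s₁, …, s_N, s_{N+1} be exchangeable real-valued random variables, let α ∈ (0,1), set k = ⌈(N+1)(1−α)⌉ and assume k ≤ N, and let ε be the k-th smallest value among s₁, …, s_N. Then P(s_{N+1} ≤ ε) ≥ 1 − α. -/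
open MeasureTheory Finset
open scoped ENNReal

/-- The k-th smallest value (k ≥ 1) among the reals `v 0, …, v (N-1)`, defined as the
infimum of thresholds below which at least k of the values lie. -/
noncomputable def kthOrderStat {N : ℕ} (v : Fin N → ℝ) (k : ℕ) : ℝ :=
  sInf {t : ℝ | k ≤ (Finset.univ.filter (fun i : Fin N => v i ≤ t)).card}

lemma kth_attained {N : ℕ} (v : Fin N → ℝ) (k : ℕ) (hk1 : 1 ≤ k) (hkN : k ≤ N) :
    k ≤ (Finset.univ.filter (fun i : Fin N => v i ≤ kthOrderStat v k)).card := by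
  have hN : 0 < N := lt_of_lt_of_le hk1 hkN
  set S : Set ℝ := {t : ℝ | k ≤ (Finset.univ.filter (fun i : Fin N => v i ≤ t)).card} with hS
  have hF : (Finset.univ.image v).Nonempty := Finset.Nonempty.image ⟨⟨0, hN⟩, mem_univ _⟩ v
  set M := (Finset.univ.image v).max' hF with hM
  have hMS : M ∈ S := by
    have h1 : Finset.univ.filter (fun i : Fin N => v i ≤ M) = Finset.univ := by
      ext i; simp only [mem_filter, mem_univ, true_and, iff_true]
      exact Finset.le_max' _ _ (mem_image_of_mem v (mem_univ i))
    simpa [hS, h1, Finset.card_univ] using hkN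
  set W := (Finset.univ.image v).filter
      (fun x => k ≤ (Finset.univ.filter (fun i : Fin N => v i ≤ x)).card) with hW
  have hWne : W.Nonempty := ⟨M, by
    refine mem_filter.mpr ⟨(Finset.univ.image v).max'_mem hF, hMS⟩⟩
  set m := W.min' hWne with hm
  have hmS : m ∈ S := (mem_filter.mp (W.min'_mem hWne)).2
  have hlb : ∀ t ∈ S, m ≤ t := by
    intro t ht
    have hcard : k ≤ (Finset.univ.filter (fun i : Fin N => v i ≤ t)).card := ht
    have hne : (Finset.univ.filter (fun i : Fin N => v i ≤ t)).Nonempty :=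
      Finset.card_pos.mp (lt_of_lt_of_le hk1 hcard)
    obtain ⟨i0, hi0⟩ := hne
    have hFt : ((Finset.univ.image v).filter (fun y => y ≤ t)).Nonempty :=
      ⟨v i0, mem_filter.mpr ⟨mem_image_of_mem v (mem_univ i0), (mem_filter.mp hi0).2⟩⟩
    set x := ((Finset.univ.image v).filter (fun y => y ≤ t)).max' hFt with hx
    have hxt : x ≤ t := (mem_filter.mp (Finset.max'_mem _ hFt)).2
    have hsub : Finset.univ.filter (fun i : Fin N => v i ≤ t)
        ⊆ Finset.univ.filter (fun i : Fin N => v i ≤ x) := by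
      intro i hi
      refine mem_filter.mpr ⟨mem_univ _, ?_⟩
      have := Finset.le_max' ((Finset.univ.image v).filter (fun y => y ≤ t)) (v i)
        (mem_filter.mpr ⟨mem_image_of_mem v (mem_univ i), (mem_filter.mp hi).2⟩)
      rw [hx]; exact this
    have hxW : x ∈ W := mem_filter.mpr ⟨(mem_filter.mp (Finset.max'_mem _ hFt)).1,
      le_trans hcard (Finset.card_le_card hsub)⟩
    exact le_trans (W.min'_le x hxW) hxt
  have heq : kthOrderStat v k = m := by
    refine le_antisymm (csInf_le ⟨m, fun t ht => hlb t ht⟩ hmS) (le_csInf ⟨M, hMS⟩ hlb)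
  rw [show kthOrderStat v k = m from heq]
  exact hmS

lemma rank_lemma {M : ℕ} (hM : 0 < M) (w : Fin M → ℝ) (k : ℕ) (hk : k ≤ M) :
    k ≤ (Finset.univ.filter (fun j : Fin M =>
      (Finset.univ.filter (fun i => w i < w j)).card < k)).card := by
  by_contra h
  push_neg at h
  set A := Finset.univ.filter (fun j : Fin M =>
      (Finset.univ.filter (fun i => w i < w j)).card < k) with hA
  have hcompl : (Aᶜ : Finset (Fin M)).Nonempty := by
    rw [← Finset.card_pos, Finset.card_compl]
    have : A.card < M := lt_of_lt_of_le h hk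
    simp only [Fintype.card_fin]; omega
  obtain ⟨j0, hj0, hj0min⟩ := Finset.exists_min_image _ w hcompl
  have hj0A : j0 ∉ A := Finset.mem_compl.mp hj0
  have hj0k : k ≤ (Finset.univ.filter (fun i => w i < w j0)).card := by
    by_contra hc; push_neg at hc
    exact hj0A (mem_filter.mpr ⟨mem_univ _, hc⟩)
  have hsub : Finset.univ.filter (fun i => w i < w j0) ⊆ A := by
    intro i hi
    by_contra hiA
    have : w j0 ≤ w i := hj0min i (Finset.mem_compl.mpr hiA)
    exact absurd (mem_filter.mp hi).2 (not_lt.mpr this)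
  exact absurd (le_trans hj0k (Finset.card_le_card hsub)) (not_le.mpr h)
/-- split conformal prediction. For exchangeable scores s₁,…,s_{N+1}, with
k = ⌈(N+1)(1−α)⌉ ≤ N and ε the k-th smallest of the first N scores,
P(s_{N+1} ≤ ε) ≥ 1 − α. -/
theorem split_conformal_coverage {Ω : Type*} [MeasurableSpace Ω]
    (μ : Measure Ω) [IsProbabilityMeasure μ] (N : ℕ) (hN : 0 < N)
    (s : Fin (N + 1) → Ω → ℝ) (hs : ∀ i, Measurable (s i))
    (hexch : ∀ σ : Equiv.Perm (Fin (N + 1)),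
      Measure.map (fun ω => fun i => s (σ i) ω) μ
        = Measure.map (fun ω => fun i => s i ω) μ)
    (α : ℝ) (hα : α ∈ Set.Ioo (0:ℝ) 1)
    (k : ℕ) (hk : k = ⌈(N + 1 : ℝ) * (1 - α)⌉₊) (hkN : k ≤ N) :
    1 - α ≤ (μ {ω | s (Fin.last N) ω
        ≤ kthOrderStat (fun i : Fin N => s i.castSucc ω) k}).toReal := by
  obtain ⟨hα0, hα1⟩ := hα
  have hk1 : 1 ≤ k := by
    rw [hk]
    have h0 : (0:ℝ) < (N + 1 : ℝ) * (1 - α) :=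
      mul_pos (by positivity) (by linarith)
    exact Nat.ceil_pos.mpr h0
  set svec : Ω → (Fin (N+1) → ℝ) := fun ω i => s i ω with hsvec
  have hmsvec : Measurable svec := measurable_pi_iff.mpr hs
  set g : Fin (N+1) → (Fin (N+1) → ℝ) → ℕ :=
    fun j v => (Finset.univ.filter (fun i => v i < v j)).card with hg
  have hgm : ∀ j, Measurable (g j) := by
    intro j
    have hge : g j = fun v => ∑ i : Fin (N+1), if v i < v j then 1 else 0 := by
      funext v
      exact Finset.card_filter _ _
    rw [hge]
    exact Finset.measurable_sum _ (fun i _ =>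
      Measurable.ite (measurableSet_lt (measurable_pi_apply i) (measurable_pi_apply j))
        measurable_const measurable_const)
  set B : Fin (N+1) → Set (Fin (N+1) → ℝ) := fun j => {v | g j v < k} with hB
  have hBm : ∀ j, MeasurableSet (B j) := fun j => (hgm j) measurableSet_Iio
  set A : Fin (N+1) → Set Ω := fun j => svec ⁻¹' (B j) with hA
  have hAm : ∀ j, MeasurableSet (A j) := fun j => hmsvec (hBm j)
  have hAeq : ∀ j, μ (A j) = μ (A (Fin.last N)) := by
    intro j
    set σ := Equiv.swap j (Fin.last N) with hσ
    have hcomp : Measurable (fun v : Fin (N+1) → ℝ => v ∘ σ) :=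
      measurable_pi_iff.mpr fun i => measurable_pi_apply (σ i)
    have hpre : (fun v : Fin (N+1) → ℝ => v ∘ σ) ⁻¹' (B (Fin.last N)) = B j := by
      ext v
      simp only [hB, Set.mem_preimage, Set.mem_setOf_eq, hg]
      have hcard : (Finset.univ.filter (fun i => (v ∘ σ) i < (v ∘ σ) (Fin.last N))).card
          = (Finset.univ.filter (fun i => v i < v j)).card := by
        have hσlast : σ (Fin.last N) = j := Equiv.swap_apply_right _ _
        refine Finset.card_bij (fun i _ => σ i) ?_ ?_ ?_
        · intro i hi
          refine Finset.mem_filter.mpr ⟨Finset.mem_univ _, ?_⟩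
          have := (Finset.mem_filter.mp hi).2
          simpa [Function.comp, hσlast] using this
        · intro a ha b hb hab
          exact σ.injective hab
        · intro b hb
          refine ⟨σ.symm b, ?_, by simp⟩
          refine Finset.mem_filter.mpr ⟨Finset.mem_univ _, ?_⟩
          have := (Finset.mem_filter.mp hb).2
          simpa [Function.comp, hσlast] using this
      rw [hcard]
    calc μ (A j) = (Measure.map svec μ) (B j) := (Measure.map_apply hmsvec (hBm j)).symm
      _ = (Measure.map svec μ) ((fun v => v ∘ σ) ⁻¹' (B (Fin.last N))) := by rw [hpre]
      _ = (Measure.map (fun v => v ∘ σ) (Measure.map svec μ)) (B (Fin.last N)) :=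
          (Measure.map_apply hcomp (hBm _)).symm
      _ = (Measure.map svec μ) (B (Fin.last N)) := by
          rw [Measure.map_map hcomp hmsvec]
          have hce : ((fun v : Fin (N+1) → ℝ => v ∘ σ) ∘ svec)
              = fun ω => fun i => s (σ i) ω := rfl
          rw [hce, hexch σ]
      _ = μ (A (Fin.last N)) := Measure.map_apply hmsvec (hBm _)
  have hpoint : ∀ ω, (k : ℝ≥0∞) ≤ ∑ j : Fin (N+1), (A j).indicator (fun _ => (1:ℝ≥0∞)) ω := by
    intro ω
    have hr := rank_lemma (Nat.succ_pos N) (fun j => s j ω) k (le_trans hkN (Nat.le_succ N))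
    have hsum : ∑ j : Fin (N+1), (A j).indicator (fun _ => (1:ℝ≥0∞)) ω
        = ((Finset.univ.filter (fun j => g j (svec ω) < k)).card : ℝ≥0∞) := by
      rw [Finset.card_filter]
      push_cast
      refine Finset.sum_congr rfl ?_
      intro j _
      by_cases hj : g j (svec ω) < k
      · rw [if_pos hj, Set.indicator_of_mem (show ω ∈ A j from hj)]
      · rw [if_neg hj, Set.indicator_of_notMem (show ω ∉ A j from hj)]
    rw [hsum]
    exact_mod_cast hr
  have hklast : (k : ℝ≥0∞) ≤ (((N+1:ℕ)):ℝ≥0∞) * μ (A (Fin.last N)) := by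
    have h1 : (k : ℝ≥0∞) * μ Set.univ
        ≤ ∫⁻ ω, ∑ j : Fin (N+1), (A j).indicator (fun _ => (1:ℝ≥0∞)) ω ∂μ := by
      rw [← MeasureTheory.lintegral_const]
      exact lintegral_mono hpoint
    rw [MeasureTheory.lintegral_finset_sum _
        (fun j _ => (measurable_const.indicator (hAm j)))] at h1
    have h2 : ∀ j : Fin (N+1), ∫⁻ ω, (A j).indicator (fun _ => (1:ℝ≥0∞)) ω ∂μ = μ (A j) := by
      intro j
      rw [MeasureTheory.lintegral_indicator (hAm j)]
      simp
    simp only [h2, measure_univ, mul_one] at h1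
    calc (k : ℝ≥0∞) ≤ ∑ j : Fin (N+1), μ (A j) := h1
      _ = (((N+1:ℕ)):ℝ≥0∞) * μ (A (Fin.last N)) := by
          rw [Finset.sum_congr rfl (fun j _ => hAeq j), Finset.sum_const,
            Finset.card_univ, Fintype.card_fin, nsmul_eq_mul]
  have hsubset : A (Fin.last N) ⊆ {ω | s (Fin.last N) ω
      ≤ kthOrderStat (fun i : Fin N => s i.castSucc ω) k} := by
    intro ω hω
    simp only [Set.mem_setOf_eq]
    by_contra hlt
    push_neg at hlt
    have h2 := kth_attained (fun i : Fin N => s i.castSucc ω) k hk1 hkN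
    have hmaps : ∀ i ∈ Finset.univ.filter (fun i : Fin N =>
        s i.castSucc ω ≤ kthOrderStat (fun i : Fin N => s i.castSucc ω) k),
        i.castSucc ∈ Finset.univ.filter
          (fun i : Fin (N+1) => s i ω < s (Fin.last N) ω) := by
      intro i hi
      refine Finset.mem_filter.mpr ⟨Finset.mem_univ _, ?_⟩
      exact lt_of_le_of_lt (Finset.mem_filter.mp hi).2 hlt
    have hcard := Finset.card_le_card_of_injOn _ hmaps
      (fun a _ b _ h => Fin.castSucc_injective N h)
    have hAω : g (Fin.last N) (svec ω) < k := hω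
    exact absurd (le_trans h2 hcard) (not_le.mpr hAω)
  have hmono : μ (A (Fin.last N)) ≤ μ {ω | s (Fin.last N) ω
      ≤ kthOrderStat (fun i : Fin N => s i.castSucc ω) k} := measure_mono hsubset
  have h3 : (k:ℝ) ≤ ((N:ℝ)+1) * (μ (A (Fin.last N))).toReal := by
    have hne : ((((N+1:ℕ)):ℝ≥0∞) * μ (A (Fin.last N))) ≠ ⊤ :=
      ENNReal.mul_ne_top (ENNReal.natCast_ne_top _) (measure_ne_top μ _)
    have := ENNReal.toReal_mono hne hklast
    rw [ENNReal.toReal_natCast, ENNReal.toReal_mul, ENNReal.toReal_natCast] at this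
    push_cast at this ⊢
    linarith
  have h4 : 1 - α ≤ (k:ℝ) / ((N:ℝ)+1) := by
    rw [le_div_iff₀ (by positivity)]
    have hceil : ((N:ℝ)+1) * (1 - α) ≤ (k:ℝ) := by
      rw [hk]
      have := Nat.le_ceil ((N + 1 : ℝ) * (1 - α))
      push_cast at this ⊢
      linarith
    linarith
  have h5 : (k:ℝ) / ((N:ℝ)+1) ≤ (μ (A (Fin.last N))).toReal := by
    rw [div_le_iff₀ (by positivity)]
    linarith
  have h6 : (μ (A (Fin.last N))).toReal ≤ (μ {ω | s (Fin.last N) ω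
      ≤ kthOrderStat (fun i : Fin N => s i.castSucc ω) k}).toReal :=
    ENNReal.toReal_mono (measure_ne_top μ _) hmono
  linarith
end
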